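/- arXiv:2201.01387 — 4 statements merged into one kernel-verified Lean document; each statement's English description precedes it below -/
import Mathlib

section
/- If P is positive semidefinite and solves the discrete algebraic Riccati equation P = Q + AᵀPA − AᵀPB(BᵀPB + R)⁻¹BᵀPA with Q, R positive definite, then P is in fact positive definite (P ⪰ Q ≻ 0). -/
open Matrix

/-- Spectral radius of a real matrix: max modulus of its complex eigenvalues. -/
noncomputable def specRad {d : ℕ} (M : Matrix (Fin d) (Fin d) ℝ) : ENNReal :=
  spectralRadius ℂ (M.map Complex.ofReal)

/-- Operator norm of a real matrix induced by Euclidean norms. -/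
noncomputable def opNorm {d₁ d₂ : ℕ} (M : Matrix (Fin d₁) (Fin d₂) ℝ) : ℝ :=
  ‖LinearMap.toContinuousLinearMap (Matrix.toEuclideanLin M)‖

/-- Euclidean norm of a real vector. -/
noncomputable def enorm {n : ℕ} (v : Fin n → ℝ) : ℝ := Real.sqrt (∑ i, (v i)^2)

/-- Key algebraic identity: completion of squares for the Riccati expression. -/
lemma riccati_key {d du : ℕ} (A P : Matrix (Fin d) (Fin d) ℝ) (B : Matrix (Fin d) (Fin du) ℝ)
    (S R : Matrix (Fin du) (Fin du) ℝ) (K : Matrix (Fin du) (Fin d) ℝ)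
    (hPsym : Pᵀ = P) (hBPA : Bᵀ * P * A = S * K) (hAPB : Aᵀ * P * B = Kᵀ * S)
    (hBPB : Bᵀ * P * B = S - R) :
    Aᵀ * P * A - Kᵀ * S * K = (A - B * K)ᵀ * P * (A - B * K) + Kᵀ * R * K := by
  have expand : (A - B * K)ᵀ * P * (A - B * K) + Kᵀ * R * K
      = Aᵀ * P * A - Aᵀ * P * B * K - Kᵀ * (Bᵀ * P * A) + Kᵀ * (Bᵀ * P * B) * K
        + Kᵀ * R * K := by
    simp only [Matrix.transpose_sub, Matrix.transpose_mul, hPsym, Matrix.transpose_transpose,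
      Matrix.sub_mul, Matrix.mul_sub, Matrix.mul_assoc]
    abel
  rw [expand, hAPB, hBPA, hBPB, Matrix.mul_sub, Matrix.sub_mul,
    ← Matrix.mul_assoc Kᵀ S K]
  abel

/-- A PSD Riccati solution with positive definite Q is positive definite, indeed P ⪰ Q. -/
theorem riccati_solution_posdef {d du : ℕ}
    (A P Q : Matrix (Fin d) (Fin d) ℝ) (B : Matrix (Fin d) (Fin du) ℝ)
    (R : Matrix (Fin du) (Fin du) ℝ)
    (hQ : Q.PosDef) (hR : R.PosDef) (hP : P.PosSemidef)
    (hRic : P = Q + Aᵀ * P * A - Aᵀ * P * B * (Bᵀ * P * B + R)⁻¹ * (Bᵀ * P * A)) :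
    (P - Q).PosSemidef ∧ P.PosDef := by
  have hPsym : Pᵀ = P := by
    have := hP.isHermitian.eq
    rwa [Matrix.conjTranspose_eq_transpose_of_trivial] at this
  have hRsym : Rᵀ = R := by
    have := hR.isHermitian.eq
    rwa [Matrix.conjTranspose_eq_transpose_of_trivial] at this
  have hBPBpsd : (Bᵀ * P * B).PosSemidef := by
    have := hP.conjTranspose_mul_mul_same B
    simpa using this
  have hSpd : (Bᵀ * P * B + R).PosDef := Matrix.PosDef.posSemidef_add hBPBpsd hR
  have hSdet : IsUnit (Bᵀ * P * B + R).det := isUnit_iff_isUnit_det _ |>.1 hSpd.isUnit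
  have hSinv : (Bᵀ * P * B + R) * (Bᵀ * P * B + R)⁻¹ = 1 := Matrix.mul_nonsing_inv _ hSdet
  have hBPA : Bᵀ * P * A = (Bᵀ * P * B + R) * ((Bᵀ * P * B + R)⁻¹ * (Bᵀ * P * A)) := by
    rw [← Matrix.mul_assoc, hSinv, Matrix.one_mul]
  have hAPB : Aᵀ * P * B
      = ((Bᵀ * P * B + R)⁻¹ * (Bᵀ * P * A))ᵀ * (Bᵀ * P * B + R) := by
    have h := congrArg Matrix.transpose hBPA
    simp only [Matrix.transpose_nonsing_inv, Matrix.transpose_add, Matrix.transpose_mul,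
      Matrix.transpose_transpose, hPsym, hRsym] at h ⊢
    simp only [Matrix.mul_assoc] at h ⊢
    exact h
  have hBPB' : Bᵀ * P * B = (Bᵀ * P * B + R) - R := by abel
  have key := riccati_key A P B (Bᵀ * P * B + R) R ((Bᵀ * P * B + R)⁻¹ * (Bᵀ * P * A))
    hPsym hBPA hAPB hBPB'
  have h6 : Aᵀ * P * B * (Bᵀ * P * B + R)⁻¹ * (Bᵀ * P * A)
      = ((Bᵀ * P * B + R)⁻¹ * (Bᵀ * P * A))ᵀ * (Bᵀ * P * B + R)
          * ((Bᵀ * P * B + R)⁻¹ * (Bᵀ * P * A)) := by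
    rw [← hAPB, Matrix.mul_assoc]
  have hPQeq : P - Q = Aᵀ * P * A
      - ((Bᵀ * P * B + R)⁻¹ * (Bᵀ * P * A))ᵀ * (Bᵀ * P * B + R)
          * ((Bᵀ * P * B + R)⁻¹ * (Bᵀ * P * A)) := by
    conv_lhs => rw [hRic]
    rw [h6]
    abel
  rw [key] at hPQeq
  have hterm1 : ((A - B * ((Bᵀ * P * B + R)⁻¹ * (Bᵀ * P * A)))ᵀ * P
      * (A - B * ((Bᵀ * P * B + R)⁻¹ * (Bᵀ * P * A)))).PosSemidef := by
    have := hP.conjTranspose_mul_mul_same (A - B * ((Bᵀ * P * B + R)⁻¹ * (Bᵀ * P * A)))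
    simpa using this
  have hterm2 : ((((Bᵀ * P * B + R)⁻¹ * (Bᵀ * P * A))ᵀ) * R
      * ((Bᵀ * P * B + R)⁻¹ * (Bᵀ * P * A))).PosSemidef := by
    have := hR.posSemidef.conjTranspose_mul_mul_same ((Bᵀ * P * B + R)⁻¹ * (Bᵀ * P * A))
    simpa using this
  have hPQ : (P - Q).PosSemidef := hPQeq ▸ hterm1.add hterm2
  refine ⟨hPQ, ?_⟩
  have hPeq : P = Q + (P - Q) := by abel
  rw [hPeq]
  exact hQ.add_posSemidef hPQ
end

section
/- Theorem (stabilization via Riccati feedback): If P is positive semidefinite and solves the discrete algebraic Riccati equation for (A, B, Q, R) with Q, R positive definite, and K = −(BᵀPB + R)⁻¹BᵀPA, then every complex eigenvalue λ of A + BK satisfies |λ| < 1. -/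
/-!
Write `L = A + B K` for the closed loop. Because `(BᵀPB + R) K = -BᵀPA`, the Riccati equation is
equivalent to the Lyapunov equation `P - LᵀPL = Q + KᵀRK`, whose right-hand side is positive
definite. For an eigenvector `v` of `L` with eigenvalue `λ`, the quadratic form of the left-hand
side at `v` is `(1 - |λ|²) v*Pv` with `v*Pv ≥ 0`, so positivity forces `|λ| < 1`.
-/

open Matrix

open scoped ComplexOrder

namespace Matrix

theorem sub_transpose_mul_mul_eq_of_riccati {α n m : Type*} [CommRing α] [Fintype n] [Fintype m]
    {A P Q : Matrix n n α} {B : Matrix n m α} {R : Matrix m m α} {K : Matrix m n α}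
    (hK : (Bᵀ * P * B + R) * K = -(Bᵀ * P * A))
    (hRic : P = Q + Aᵀ * P * A + Aᵀ * P * B * K) :
    P - (A + B * K)ᵀ * P * (A + B * K) = Q + Kᵀ * R * K := by
  have hBA : Bᵀ * P * A = -(Bᵀ * P * B * K) - R * K := by
    rw [← neg_add', ← Matrix.add_mul, hK, neg_neg]
  have hcross : Kᵀ * (Bᵀ * P * A) + Kᵀ * (Bᵀ * P * B) * K = -(Kᵀ * R * K) := by
    rw [hBA]
    simp only [Matrix.mul_sub, Matrix.mul_neg, Matrix.mul_assoc]
    abel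
  calc P - (A + B * K)ᵀ * P * (A + B * K)
      = P - (Aᵀ * P * A + Aᵀ * P * B * K)
          - (Kᵀ * (Bᵀ * P * A) + Kᵀ * (Bᵀ * P * B) * K) := by
        simp only [transpose_add, transpose_mul, Matrix.add_mul, Matrix.mul_add, Matrix.mul_assoc]
        abel
    _ = Q + Kᵀ * R * K := by
        rw [hcross]
        nth_rewrite 1 [hRic]
        abel

theorem dotProduct_conjTranspose_mul_mul_mulVec {R n m : Type*} [CommSemiring R] [StarRing R]
    [Fintype n] [Fintype m] (L : Matrix m n R) (P : Matrix m m R) (v : n → R) :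
    star v ⬝ᵥ (Lᴴ * P * L) *ᵥ v = star (L *ᵥ v) ⬝ᵥ P *ᵥ (L *ᵥ v) := by
  rw [← mulVec_mulVec, ← mulVec_mulVec, dotProduct_mulVec, star_mulVec, ← dotProduct_mulVec]

theorem norm_lt_one_of_mem_spectrum_of_posDef_sub {𝕜 n : Type*} [RCLike 𝕜] [Fintype n]
    [DecidableEq n] {L P : Matrix n n 𝕜} (hP : P.PosSemidef) (hL : (P - Lᴴ * P * L).PosDef)
    {μ : 𝕜} (hμ : μ ∈ spectrum 𝕜 L) : ‖μ‖ < 1 := by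
  obtain ⟨v, hv⟩ := (Module.End.hasEigenvalue_iff_mem_spectrum (f := L.toLin')).mpr
    (by rwa [spectrum_toLin']) |>.exists_hasEigenvector
  have hLv : L *ᵥ v = μ • v := by simpa using hv.apply_eq_smul
  obtain ⟨hq_re, hq_im⟩ := RCLike.nonneg_iff.mp (hP.dotProduct_mulVec_nonneg v)
  have hq : star v ⬝ᵥ P *ᵥ v = (RCLike.re (star v ⬝ᵥ P *ᵥ v) : 𝕜) :=
    (RCLike.conj_eq_iff_re.mp (RCLike.conj_eq_iff_im.mpr hq_im)).symm
  have hdecay : star v ⬝ᵥ (P - Lᴴ * P * L) *ᵥ v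
      = ((1 - ‖μ‖ ^ 2) * RCLike.re (star v ⬝ᵥ P *ᵥ v) : ℝ) := by
    rw [sub_mulVec, dotProduct_sub, dotProduct_conjTranspose_mul_mul_mulVec, hLv, star_smul,
      mulVec_smul, smul_dotProduct, dotProduct_smul, smul_eq_mul, smul_eq_mul, RCLike.ofReal_mul,
      ← hq, RCLike.star_def, ← mul_assoc, RCLike.conj_mul]
    push_cast
    ring
  have hpos : 0 < (1 - ‖μ‖ ^ 2) * RCLike.re (star v ⬝ᵥ P *ᵥ v) :=
    RCLike.ofReal_pos.mp (hdecay ▸ hL.dotProduct_mulVec_pos hv.2)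
  have hμ2 : ‖μ‖ ^ 2 < 1 := by linarith [pos_of_mul_pos_left hpos hq_re]
  exact (pow_lt_one_iff_of_nonneg (norm_nonneg μ) two_ne_zero).mp hμ2

theorem map_ofReal_mul {l m n : Type*} [Fintype m] (M : Matrix l m ℝ) (N : Matrix m n ℝ) :
    (M * N).map Complex.ofReal = M.map Complex.ofReal * N.map Complex.ofReal :=
  Matrix.map_mul (f := Complex.ofRealHom)

theorem transpose_map_ofReal {m n : Type*} (M : Matrix m n ℝ) :
    Mᵀ.map Complex.ofReal = (M.map Complex.ofReal)ᴴ := by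
  rw [← conjTranspose_eq_transpose_of_trivial, conjTranspose_map]
  exact fun x => (Complex.conj_ofReal x).symm

theorem PosSemidef.map_ofReal {n : Type*} [Fintype n] {M : Matrix n n ℝ} (hM : M.PosSemidef) :
    (M.map Complex.ofReal).PosSemidef := by
  classical
  open scoped MatrixOrder in
  obtain ⟨C, rfl⟩ := CStarAlgebra.nonneg_iff_eq_star_mul_self.mp hM.nonneg
  rw [star_eq_conjTranspose, map_ofReal_mul, conjTranspose_eq_transpose_of_trivial,
    transpose_map_ofReal]
  exact posSemidef_conjTranspose_mul_self _

theorem PosDef.map_ofReal {n : Type*} [Fintype n] [DecidableEq n] {M : Matrix n n ℝ}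
    (hM : M.PosDef) : (M.map Complex.ofReal).PosDef :=
  hM.posSemidef.map_ofReal.posDef_iff_isUnit.mpr (hM.isUnit.map Complex.ofRealHom.mapMatrix)

end Matrix

/-- Stabilization via Riccati feedback: all eigenvalues of the closed loop lie inside the unit circle. -/
theorem riccati_feedback_stabilizes {d du : ℕ}
    (A P Q : Matrix (Fin d) (Fin d) ℝ) (B : Matrix (Fin d) (Fin du) ℝ)
    (R : Matrix (Fin du) (Fin du) ℝ)
    (hQ : Q.PosDef) (hR : R.PosDef) (hP : P.PosSemidef)
    (hRic : P = Q + Aᵀ * P * A - Aᵀ * P * B * (Bᵀ * P * B + R)⁻¹ * (Bᵀ * P * A))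
    (K : Matrix (Fin du) (Fin d) ℝ)
    (hK : K = -((Bᵀ * P * B + R)⁻¹ * (Bᵀ * P * A))) :
    ∀ lam ∈ spectrum ℂ ((A + B * K).map Complex.ofReal), ‖lam‖ < 1 := by
  intro lam hlam
  have hS : (Bᵀ * P * B + R).PosDef :=
    PosDef.posSemidef_add (by simpa using hP.conjTranspose_mul_mul_same B) hR
  have hSK : (Bᵀ * P * B + R) * K = -(Bᵀ * P * A) := by
    rw [hK, Matrix.mul_neg,
      mul_nonsing_inv_cancel_left _ _ ((isUnit_iff_isUnit_det _).mp hS.isUnit)]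
  have hRicK : P = Q + Aᵀ * P * A + Aᵀ * P * B * K := by
    rw [hK, Matrix.mul_neg, ← sub_eq_add_neg, ← Matrix.mul_assoc]
    exact hRic
  have hQKRK : (Q + Kᵀ * R * K).PosDef :=
    hQ.add_posSemidef (by simpa using hR.posSemidef.conjTranspose_mul_mul_same K)
  refine norm_lt_one_of_mem_spectrum_of_posDef_sub hP.map_ofReal ?_ hlam
  rw [← transpose_map_ofReal, ← map_ofReal_mul, ← map_ofReal_mul,
    ← Matrix.map_sub _ Complex.ofReal_sub, sub_transpose_mul_mul_eq_of_riccati hSK hRicK]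
  exact hQKRK.map_ofReal
end

section
/- For any positive semidefinite P, positive definite R, and matrices A, B of compatible dimensions, the Riccati update satisfies the completion-of-squares identity: for every gain K₀, Q + AᵀPA − AᵀPB(BᵀPB+R)⁻¹BᵀPA = Q + K*ᵀRK* + (A+BK*)ᵀP(A+BK*) ⪯ Q + K₀ᵀRK₀ + (A+BK₀)ᵀP(A+BK₀), where K* = −(BᵀPB+R)⁻¹BᵀPA. -/
open Matrix

/-!
Writing `S = BᵀPB + R` and `M = BᵀPA`, the closed-loop cost of a gain `K₀` expands to
`AᵀPA + K₀ᵀSK₀ + K₀ᵀM + MᵀK₀`, a quadratic in `K₀` with leading coefficient `S`.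
Completing the square rewrites it as `AᵀPA - MᵀS⁻¹M + (K₀ - K*)ᵀS(K₀ - K*)` with
`K* = -S⁻¹M`: the constant term is the Riccati update, and the remainder is positive
semidefinite because `S` is positive definite.
-/

namespace Matrix

variable {α m n : Type*} [CommRing α] [Fintype n]

theorem IsSymm.complete_square [DecidableEq n] {S : Matrix n n α} (hS : S.IsSymm)
    (hdet : IsUnit S.det) (M X : Matrix n m α) :
    Xᵀ * S * X + Xᵀ * M + Mᵀ * X
      = (X + S⁻¹ * M)ᵀ * S * (X + S⁻¹ * M) - Mᵀ * S⁻¹ * M := by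
  simp only [transpose_add, transpose_mul, hS.inv.eq, Matrix.add_mul, Matrix.mul_add,
    Matrix.mul_assoc, mul_nonsing_inv_cancel_left _ _ hdet, nonsing_inv_mul_cancel_left _ _ hdet]
  abel

theorem closedLoop_cost_eq_quadratic [Fintype m] {P : Matrix n n α} (hP : P.IsSymm)
    (A : Matrix n n α) (B : Matrix n m α) (R : Matrix m m α) (K₀ : Matrix m n α) :
    K₀ᵀ * R * K₀ + (A + B * K₀)ᵀ * P * (A + B * K₀)
      = Aᵀ * P * A + (K₀ᵀ * (Bᵀ * P * B + R) * K₀ + K₀ᵀ * (Bᵀ * P * A)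
        + (Bᵀ * P * A)ᵀ * K₀) := by
  simp only [transpose_add, transpose_mul, transpose_transpose, hP.eq, Matrix.add_mul,
    Matrix.mul_add, Matrix.mul_assoc]
  abel

theorem closedLoop_cost_eq_riccati_add_square [Fintype m] [DecidableEq m] {P : Matrix n n α}
    {R : Matrix m m α} (hP : P.IsSymm) (hR : R.IsSymm) (A : Matrix n n α) (B : Matrix n m α)
    (hdet : IsUnit (Bᵀ * P * B + R).det) (K₀ : Matrix m n α) :
    K₀ᵀ * R * K₀ + (A + B * K₀)ᵀ * P * (A + B * K₀)
      = Aᵀ * P * A - Aᵀ * P * B * (Bᵀ * P * B + R)⁻¹ * (Bᵀ * P * A)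
        + (K₀ + (Bᵀ * P * B + R)⁻¹ * (Bᵀ * P * A))ᵀ * (Bᵀ * P * B + R)
          * (K₀ + (Bᵀ * P * B + R)⁻¹ * (Bᵀ * P * A)) := by
  have hS : (Bᵀ * P * B + R).IsSymm := by
    simp only [IsSymm, transpose_add, transpose_mul, transpose_transpose, hP.eq, hR.eq,
      Matrix.mul_assoc]
  have hM : (Bᵀ * P * A)ᵀ = Aᵀ * P * B := by
    simp only [transpose_mul, transpose_transpose, hP.eq, Matrix.mul_assoc]
  rw [closedLoop_cost_eq_quadratic hP, hS.complete_square hdet, hM]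
  abel

end Matrix

theorem Matrix.PosSemidef.transpose_mul_mul_add_posDef {m n : Type*} [Fintype m] [Fintype n]
    {P : Matrix n n ℝ} {R : Matrix m m ℝ} (hP : P.PosSemidef) (hR : R.PosDef)
    (B : Matrix n m ℝ) : (Bᵀ * P * B + R).PosDef := by
  have hBPB := hP.conjTranspose_mul_mul_same B
  rw [conjTranspose_eq_transpose_of_trivial] at hBPB
  exact PosDef.posSemidef_add hBPB hR

theorem riccati_completion_of_squares_general {d du : ℕ}
    (A P Q : Matrix (Fin d) (Fin d) ℝ) (B : Matrix (Fin d) (Fin du) ℝ)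
    (R : Matrix (Fin du) (Fin du) ℝ)
    (hR : R.PosDef) (hP : P.PosSemidef)
    (K : Matrix (Fin du) (Fin d) ℝ)
    (hK : K = -((Bᵀ * P * B + R)⁻¹ * (Bᵀ * P * A))) :
    Q + Aᵀ * P * A - Aᵀ * P * B * (Bᵀ * P * B + R)⁻¹ * (Bᵀ * P * A)
      = Q + Kᵀ * R * K + (A + B * K)ᵀ * P * (A + B * K) ∧
    ∀ K₀ : Matrix (Fin du) (Fin d) ℝ,
      (Q + K₀ᵀ * R * K₀ + (A + B * K₀)ᵀ * P * (A + B * K₀)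
        - (Q + Kᵀ * R * K + (A + B * K)ᵀ * P * (A + B * K))).PosSemidef := by
  set S := Bᵀ * P * B + R
  have hS : S.PosDef := hP.transpose_mul_mul_add_posDef hR B
  have hcost : ∀ K₀ : Matrix (Fin du) (Fin d) ℝ,
      Q + K₀ᵀ * R * K₀ + (A + B * K₀)ᵀ * P * (A + B * K₀)
        = Q + Aᵀ * P * A - Aᵀ * P * B * S⁻¹ * (Bᵀ * P * A)
          + (K₀ - K)ᵀ * S * (K₀ - K) := by
    intro K₀
    rw [add_assoc Q, closedLoop_cost_eq_riccati_add_square (isHermitian_iff_isSymm.mp hP.1)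
      (isHermitian_iff_isSymm.mp hR.1) A B ((isUnit_iff_isUnit_det S).mp hS.isUnit),
      hK, sub_neg_eq_add]
    abel
  refine ⟨by simp only [hcost K, sub_self, transpose_zero, Matrix.zero_mul, add_zero], ?_⟩
  intro K₀
  rw [hcost K₀, hcost K]
  simp only [sub_self, transpose_zero, Matrix.zero_mul, add_zero, add_sub_cancel_left]
  simpa only [conjTranspose_eq_transpose_of_trivial] using
    hS.posSemidef.conjTranspose_mul_mul_same (K₀ - K)

/-- Completion-of-squares identity for the Riccati update, and minimality of the Riccati gain. -/
theorem riccati_completion_of_squares {d du : ℕ}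
    (A P Q : Matrix (Fin d) (Fin d) ℝ) (B : Matrix (Fin d) (Fin du) ℝ)
    (R : Matrix (Fin du) (Fin du) ℝ)
    (hQ : Q.IsHermitian) (hR : R.PosDef) (hP : P.PosSemidef)
    (K : Matrix (Fin du) (Fin d) ℝ)
    (hK : K = -((Bᵀ * P * B + R)⁻¹ * (Bᵀ * P * A))) :
    Q + Aᵀ * P * A - Aᵀ * P * B * (Bᵀ * P * B + R)⁻¹ * (Bᵀ * P * A)
      = Q + Kᵀ * R * K + (A + B * K)ᵀ * P * (A + B * K) ∧
    ∀ K₀ : Matrix (Fin du) (Fin d) ℝ,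
      (Q + K₀ᵀ * R * K₀ + (A + B * K₀)ᵀ * P * (A + B * K₀)
        - (Q + Kᵀ * R * K + (A + B * K)ᵀ * P * (A + B * K))).PosSemidef :=
  riccati_completion_of_squares_general A P Q B R hR hP K hK
end

section
/- Monotonicity of the Riccati operator: if 0 ⪯ P₁ ⪯ P₂ (Loewner order) then R(P₁) ⪯ R(P₂), where R(P) = Q + AᵀPA − AᵀPB(BᵀPB+R)⁻¹BᵀPA. -/
open Matrix

/-!
With `S = BᵀPB + R` and `K⋆ = -S⁻¹BᵀPA`, completing the square gives, for every gain `K`,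
`Q + KᵀRK + (A + BK)ᵀP(A + BK) = 𝓡(P) + (K - K⋆)ᵀ S (K - K⋆)`.
Since `S` is positive definite, `𝓡(P)` is the Loewner minimum over `K` of the closed-loop cost,
which is monotone in `P` for each fixed `K`. Evaluating at the optimal gain `K⋆` for `P₂`,
`𝓡(P₁) ≤ cost(P₁, K⋆) ≤ cost(P₂, K⋆) = 𝓡(P₂)`.
-/

open scoped MatrixOrder

namespace Matrix

variable {n m : Type*} [Fintype n] [Fintype m]
  (Q A : Matrix n n ℝ) (B : Matrix n m ℝ) (R : Matrix m m ℝ)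

def feedbackCost (P : Matrix n n ℝ) (K : Matrix m n ℝ) : Matrix n n ℝ :=
  Q + Kᵀ * R * K + (A + B * K)ᵀ * P * (A + B * K)

variable {Q A B R}

theorem feedbackCost_mono {P₁ P₂ : Matrix n n ℝ} (h : P₁ ≤ P₂) (K : Matrix m n ℝ) :
    feedbackCost Q A B R P₁ K ≤ feedbackCost Q A B R P₂ K := by
  have hdiff : feedbackCost Q A B R P₂ K - feedbackCost Q A B R P₁ K
      = (A + B * K)ᵀ * (P₂ - P₁) * (A + B * K) := by
    simp only [feedbackCost, Matrix.mul_sub, Matrix.sub_mul]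
    abel
  rw [le_iff, hdiff]
  simpa using (le_iff.mp h).conjTranspose_mul_mul_same (A + B * K)

theorem posDef_transpose_mul_mul_add {P : Matrix n n ℝ} (hP : P.PosSemidef) (hR : R.PosDef) :
    (Bᵀ * P * B + R).PosDef := by
  simpa using PosDef.posSemidef_add (hP.conjTranspose_mul_mul_same B) hR

variable (Q A B R) [DecidableEq m]

noncomputable def riccati (P : Matrix n n ℝ) : Matrix n n ℝ :=
  Q + Aᵀ * P * A - Aᵀ * P * B * (Bᵀ * P * B + R)⁻¹ * (Bᵀ * P * A)

noncomputable def optimalGain (P : Matrix n n ℝ) : Matrix m n ℝ :=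
  -((Bᵀ * P * B + R)⁻¹ * (Bᵀ * P * A))

variable {Q A B R}

theorem feedbackCost_eq_riccati_add {P : Matrix n n ℝ} (hP : P.IsSymm) (hR : R.IsSymm)
    (hS : IsUnit (Bᵀ * P * B + R)) (K : Matrix m n ℝ) :
    feedbackCost Q A B R P K = riccati Q A B R P +
      (K - optimalGain A B R P)ᵀ * (Bᵀ * P * B + R) * (K - optimalGain A B R P) := by
  unfold feedbackCost riccati optimalGain
  set S := Bᵀ * P * B + R with hS_def
  have hS_symm : Sᵀ = S := by
    simp only [hS_def, transpose_add, transpose_mul, transpose_transpose, hP.eq, hR.eq,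
      Matrix.mul_assoc]
  have hS_inv_symm : S⁻¹ᵀ = S⁻¹ := by rw [transpose_nonsing_inv, hS_symm]
  have hS_mul_inv (X : Matrix m n ℝ) : S * (S⁻¹ * X) = X :=
    mul_nonsing_inv_cancel_left S X ((isUnit_iff_isUnit_det S).mp hS)
  have hS_inv_mul (X : Matrix m n ℝ) : S⁻¹ * (S * X) = X :=
    nonsing_inv_mul_cancel_left S X ((isUnit_iff_isUnit_det S).mp hS)
  clear_value S
  simp only [sub_neg_eq_add, transpose_add, transpose_mul, transpose_transpose, hS_inv_symm,
    hP.eq, Matrix.add_mul, Matrix.mul_add, Matrix.mul_assoc, hS_mul_inv, hS_inv_mul]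
  subst hS_def
  simp only [Matrix.add_mul, Matrix.mul_add, Matrix.mul_assoc]
  abel

theorem feedbackCost_optimalGain {P : Matrix n n ℝ} (hP : P.IsSymm) (hR : R.IsSymm)
    (hS : IsUnit (Bᵀ * P * B + R)) :
    feedbackCost Q A B R P (optimalGain A B R P) = riccati Q A B R P := by
  simp [feedbackCost_eq_riccati_add hP hR hS]

theorem riccati_le_feedbackCost {P : Matrix n n ℝ} (hP : P.PosSemidef) (hR : R.PosDef)
    (K : Matrix m n ℝ) : riccati Q A B R P ≤ feedbackCost Q A B R P K := by
  have hS := posDef_transpose_mul_mul_add (B := B) hP hR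
  rw [feedbackCost_eq_riccati_add (isHermitian_iff_isSymm.mp hP.isHermitian)
    (isHermitian_iff_isSymm.mp hR.isHermitian) hS.isUnit, le_iff, add_sub_cancel_left]
  simpa using hS.posSemidef.conjTranspose_mul_mul_same (K - optimalGain A B R P)

theorem riccati_mono (hR : R.PosDef) {P₁ P₂ : Matrix n n ℝ} (hP₁ : P₁.PosSemidef)
    (h : P₁ ≤ P₂) : riccati Q A B R P₁ ≤ riccati Q A B R P₂ := by
  have hP₂ : P₂.PosSemidef := by simpa using (le_iff.mp h).add hP₁
  calc riccati Q A B R P₁ ≤ feedbackCost Q A B R P₁ (optimalGain A B R P₂) :=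
        riccati_le_feedbackCost hP₁ hR _
    _ ≤ feedbackCost Q A B R P₂ (optimalGain A B R P₂) := feedbackCost_mono h _
    _ = riccati Q A B R P₂ :=
        feedbackCost_optimalGain (isHermitian_iff_isSymm.mp hP₂.isHermitian)
          (isHermitian_iff_isSymm.mp hR.isHermitian)
          (posDef_transpose_mul_mul_add hP₂ hR).isUnit

end Matrix

theorem riccati_operator_monotone_general {d du : ℕ}
    (A Q : Matrix (Fin d) (Fin d) ℝ) (B : Matrix (Fin d) (Fin du) ℝ)
    (R : Matrix (Fin du) (Fin du) ℝ)
    (hR : R.PosDef)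
    (P₁ P₂ : Matrix (Fin d) (Fin d) ℝ)
    (hP₁ : P₁.PosSemidef) (hle : (P₂ - P₁).PosSemidef) :
    ((Q + Aᵀ * P₂ * A - Aᵀ * P₂ * B * (Bᵀ * P₂ * B + R)⁻¹ * (Bᵀ * P₂ * A))
      - (Q + Aᵀ * P₁ * A - Aᵀ * P₁ * B * (Bᵀ * P₁ * B + R)⁻¹ * (Bᵀ * P₁ * A))).PosSemidef :=
  le_iff.mp (riccati_mono (Q := Q) (A := A) (B := B) hR hP₁ hle)

/-- Monotonicity of the Riccati operator in the Loewner order. -/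
theorem riccati_operator_monotone {d du : ℕ}
    (A Q : Matrix (Fin d) (Fin d) ℝ) (B : Matrix (Fin d) (Fin du) ℝ)
    (R : Matrix (Fin du) (Fin du) ℝ)
    (hQ : Q.IsHermitian) (hR : R.PosDef)
    (P₁ P₂ : Matrix (Fin d) (Fin d) ℝ)
    (hP₁ : P₁.PosSemidef) (hle : (P₂ - P₁).PosSemidef) :
    ((Q + Aᵀ * P₂ * A - Aᵀ * P₂ * B * (Bᵀ * P₂ * B + R)⁻¹ * (Bᵀ * P₂ * A))
      - (Q + Aᵀ * P₁ * A - Aᵀ * P₁ * B * (Bᵀ * P₁ * B + R)⁻¹ * (Bᵀ * P₁ * A))).PosSemidef :=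
  riccati_operator_monotone_general A Q B R hR P₁ P₂ hP₁ hle
end
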